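/- arXiv:2211.11681 — 3 statements merged into one kernel-verified Lean document; each statement's English description precedes it below -/
import Mathlib

section
/- Let Ω ⊂ ℝ^d be a compact set with Lebesgue measure |Ω| > 0, and for each N let X_N = (x_1^{(N)},…,x_N^{(N)}) be an N-tuple of points of Ω such that the sequence (X_N) is asymptotically uniformly distributed in Ω. Let κ_A, κ_B : Ω × Ω → ℝ be continuous, define the convolved kernel κ_C(x,y) := ∫_Ω κ_A(x,z) κ_B(z,y) dz, and assume ∫_Ω ∫_Ω κ_C(x,y)² dx dy > 0. For each N define the matrices K_A^{(N)} := [κ_A(x_i^{(N)}, x_j^{(N)})]_{i,j=1}^N, K_B^{(N)} := [κ_B(x_i^{(N)}, x_j^{(N)})]_{i,j=1}^N and K_C^{(N)} := (N/|Ω|)·[κ_C(x_i^{(N)}, x_j^{(N)})]_{i,j=1}^N. Then ‖K_C^{(N)} − K_A^{(N)} K_B^{(N)}‖_F / ‖K_C^{(N)}‖_F → 0 as N → ∞. -/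
open MeasureTheory Filter Matrix

/-- The Frobenius norm of a real `N × N` matrix. -/
noncomputable def frobNorm {N : ℕ} (M : Matrix (Fin N) (Fin N) ℝ) : ℝ :=
  Real.sqrt (∑ i, ∑ j, (M i j) ^ 2)

/-!
Write `Q_N f = (|Ω|/N) ∑ᵢ f(xᵢ)`. The entries of `K_A K_B` are `(N/|Ω|) Q_N(κ_A(xᵢ,·) κ_B(·,xⱼ))`,
so `K_C − K_A K_B` is `N/|Ω|` times the matrix of quadrature errors for the integrands defining
`κ_C`. These integrands form a compact, hence equicontinuous, family of functions on `Ω`, and on an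
equicontinuous family the pointwise convergence `Q_N f → ∫_Ω f` is uniform (Ascoli). So every entry
of the error matrix is uniformly small and its Frobenius norm is `o(N)`. On the other hand
`(|Ω|/N) ‖[κ_C(xᵢ,xⱼ)]‖_F` is the square root of the double quadrature sum `Q_N Q_N κ_C²`, which
converges to `(∫∫ κ_C²)^{1/2} > 0`.
-/

open Topology Function

theorem EquicontinuousOn.tendstoUniformlyOn_of_tendsto {ι X α : Type*} [TopologicalSpace X]
    [UniformSpace α] {F : ι → X → α} {f : X → α} {K : Set X} {l : Filter ι}
    (hK : IsCompact K) (hF : EquicontinuousOn F K) (h : ∀ x ∈ K, Tendsto (F · x) l (𝓝 (f x))) :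
    TendstoUniformlyOn F f l K := by
  have key := (EquicontinuousOn.tendsto_uniformOnFun_iff_pi' (𝔖 := {K}) (by simpa using hK)
    (by simpa using hF) l f).2 ?_
  · exact UniformOnFun.tendsto_iff_tendstoUniformlyOn.1 key K rfl
  · rw [tendsto_pi_nhds]
    rintro ⟨y, hy⟩
    exact h y (by simpa using hy)

theorem mul_div_add_one_lt {V ε : ℝ} (hV : 0 ≤ V) (hε : 0 < ε) : V * (ε / (V + 1)) < ε := by
  rw [mul_div_assoc', div_lt_iff₀ (by positivity)]
  nlinarith

section FrobNorm

variable {N : ℕ}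

theorem frobNorm_smul (t : ℝ) (M : Matrix (Fin N) (Fin N) ℝ) :
    frobNorm (t • M) = |t| * frobNorm M := by
  simp only [frobNorm, Matrix.smul_apply, smul_eq_mul, mul_pow, ← Finset.mul_sum]
  rw [Real.sqrt_mul (sq_nonneg t), Real.sqrt_sq_eq_abs]

theorem frobNorm_le_of_abs_le {M : Matrix (Fin N) (Fin N) ℝ} {b : ℝ} (hb : 0 ≤ b)
    (hM : ∀ i j, |M i j| ≤ b) : frobNorm M ≤ N * b := by
  have hsq : ∀ i j, M i j ^ 2 ≤ b ^ 2 := fun i j => by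
    simpa only [sq_abs] using pow_le_pow_left₀ (abs_nonneg _) (hM i j) 2
  calc frobNorm M ≤ Real.sqrt (∑ _i : Fin N, ∑ _j : Fin N, b ^ 2) :=
        Real.sqrt_le_sqrt (Finset.sum_le_sum fun i _ => Finset.sum_le_sum fun j _ => hsq i j)
    _ = Real.sqrt ((N * b) ^ 2) := by simp only [Finset.sum_const, Finset.card_univ,
          Fintype.card_fin, nsmul_eq_mul]; ring_nf
    _ = N * b := Real.sqrt_sq (by positivity)

end FrobNorm

noncomputable def quadSum {α : Type*} (V : ℝ) {N : ℕ} (x : Fin N → α) (f : α → ℝ) : ℝ :=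
  V / N * ∑ i, f (x i)

section Quadrature

variable {α : Type*} {V : ℝ} {N : ℕ}

theorem dist_quadSum_le {y : Fin N → α} {f g : α → ℝ} {b : ℝ} (hV : 0 ≤ V) (hb : 0 ≤ b)
    (hfg : ∀ i, dist (f (y i)) (g (y i)) ≤ b) : dist (quadSum V y f) (quadSum V y g) ≤ V * b := by
  calc dist (quadSum V y f) (quadSum V y g) = V / N * |∑ i, (f (y i) - g (y i))| := by
        rw [quadSum, quadSum, Real.dist_eq, ← mul_sub, ← Finset.sum_sub_distrib, abs_mul,
          abs_of_nonneg (by positivity)]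
    _ ≤ V / N * (N * b) := by
        gcongr
        refine (Finset.abs_sum_le_sum_abs _ _).trans ?_
        simpa [Real.dist_eq] using Finset.sum_le_sum fun i (_ : i ∈ Finset.univ) => hfg i
    _ ≤ V * b := by
        rcases N.eq_zero_or_pos with rfl | hN
        · simpa using mul_nonneg hV hb
        · rw [← mul_assoc, div_mul_cancel₀ _ (by positivity)]

theorem of_mul_of_eq_smul_quadSum (hV : V ≠ 0) (hN : N ≠ 0) (y : Fin N → α) (a b : α → α → ℝ) :
    of (fun i j => a (y i) (y j)) * of (fun i j => b (y i) (y j)) =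
      ((N : ℝ) / V) • of fun i j => quadSum V y fun z => a (y i) z * b z (y j) := by
  ext i j
  simp only [mul_apply, of_apply, Matrix.smul_apply, smul_eq_mul, quadSum, ← mul_assoc]
  rw [div_mul_div_cancel₀ hV, div_self (by exact_mod_cast hN), one_mul]

theorem frobNorm_mul_div_eq_sqrt_quadSum (hV : 0 ≤ V) (y : Fin N → α) (g : α → α → ℝ) :
    frobNorm (of fun i j => g (y i) (y j)) * (V / N) =
      Real.sqrt (quadSum V y fun z => quadSum V y fun w => g z w ^ 2) := by
  rw [frobNorm, mul_comm, ← Real.sqrt_sq (by positivity : 0 ≤ V / N), ← Real.sqrt_mul (sq_nonneg _)]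
  simp only [of_apply, quadSum, Finset.mul_sum]
  ring_nf

theorem tendsto_frobNorm_sub_div_of_tendstoUniformlyOn {Ω : Set α} {x : (N : ℕ) → Fin N → α}
    {G : ℕ → α × α → ℝ} {g : α × α → ℝ}
    (hG : TendstoUniformlyOn G g atTop (Ω ×ˢ Ω)) (hx : ∀ N i, x N i ∈ Ω) :
    Tendsto (fun N : ℕ => frobNorm (of (fun i j => g (x N i, x N j)) -
      of (fun i j => G N (x N i, x N j))) / N) atTop (𝓝 0) := by
  refine tendsto_order.2 ⟨fun a ha => .of_forall fun N =>
    ha.trans_le (div_nonneg (Real.sqrt_nonneg _) N.cast_nonneg), fun ε hε => ?_⟩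
  filter_upwards [Metric.tendstoUniformlyOn_iff.1 hG (ε / 2) (by positivity),
    eventually_gt_atTop 0] with N hN hN0
  have hentry : ∀ i j, |(of (fun i j => g (x N i, x N j)) -
      of (fun i j => G N (x N i, x N j))) i j| ≤ ε / 2 := fun i j =>
    (hN _ ⟨hx N i, hx N j⟩).le
  calc _ ≤ N * (ε / 2) / N := by gcongr; exact frobNorm_le_of_abs_le (by positivity) hentry
    _ < ε := by rw [mul_div_cancel_left₀ _ (by positivity)]; linarith

end Quadrature

section EquidistributedSamples

variable {α P : Type*} [PseudoMetricSpace α] [PseudoMetricSpace P] {Ω : Set α} {V : ℝ}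
  {x : (N : ℕ) → Fin N → α} {L : (α → ℝ) → ℝ}

theorem continuousOn_quadSum {K : Set P} {h : P → α → ℝ}
    (hh : ContinuousOn (uncurry h) (K ×ˢ Ω)) (hx : ∀ N i, x N i ∈ Ω) (N : ℕ) :
    ContinuousOn (fun p => quadSum V (x N) (h p)) K :=
  continuousOn_const.mul <| continuousOn_finsetSum _ fun i _ => hh.uncurry_right _ (hx N i)

theorem equicontinuousOn_quadSum {K : Set P} (hK : IsCompact K) (hΩ : IsCompact Ω)
    {h : P → α → ℝ} (hh : ContinuousOn (uncurry h) (K ×ˢ Ω))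
    (hx : ∀ N i, x N i ∈ Ω) (hV : 0 ≤ V) :
    EquicontinuousOn (fun N p => quadSum V (x N) (h p)) K := by
  intro p₀ hp₀
  rw [Metric.nhdsWithin_basis_ball.equicontinuousWithinAt_iff Metric.uniformity_basis_dist]
  intro ε hε
  obtain ⟨δ, hδ, hclose⟩ := Metric.uniformContinuousOn_iff.1
    ((hK.prod hΩ).uniformContinuousOn_of_continuous hh) (ε / (V + 1)) (by positivity)
  refine ⟨δ, hδ, fun p ⟨hpδ, hp⟩ N => ?_⟩
  have hslice : ∀ z ∈ Ω, dist (h p₀ z) (h p z) ≤ ε / (V + 1) := fun z hz =>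
    (hclose (p₀, z) ⟨hp₀, hz⟩ (p, z) ⟨hp, hz⟩ (by simpa [Prod.dist_eq, dist_comm] using hpδ)).le
  calc dist (quadSum V (x N) (h p₀)) (quadSum V (x N) (h p))
      ≤ V * (ε / (V + 1)) := dist_quadSum_le hV (by positivity) fun i => hslice _ (hx N i)
    _ < ε := mul_div_add_one_lt hV hε

theorem tendstoUniformlyOn_quadSum (hx : ∀ N i, x N i ∈ Ω)
    (hL : ∀ f, ContinuousOn f Ω → Tendsto (fun N => quadSum V (x N) f) atTop (𝓝 (L f)))
    {K : Set P} (hK : IsCompact K) (hΩ : IsCompact Ω)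
    {h : P → α → ℝ} (hh : ContinuousOn (uncurry h) (K ×ˢ Ω)) (hV : 0 ≤ V) :
    TendstoUniformlyOn (fun N p => quadSum V (x N) (h p)) (fun p => L (h p)) atTop K :=
  (equicontinuousOn_quadSum hK hΩ hh hx hV).tendstoUniformlyOn_of_tendsto hK fun p hp =>
    hL _ (hh.uncurry_left p hp)

theorem tendsto_quadSum_of_tendstoUniformlyOn (hx : ∀ N i, x N i ∈ Ω)
    (hL : ∀ f, ContinuousOn f Ω → Tendsto (fun N => quadSum V (x N) f) atTop (𝓝 (L f)))
    {G : ℕ → α → ℝ} {g : α → ℝ}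
    (hG : TendstoUniformlyOn G g atTop Ω) (hg : ContinuousOn g Ω) (hV : 0 ≤ V) :
    Tendsto (fun N => quadSum V (x N) (G N)) atTop (𝓝 (L g)) := by
  refine (hL g hg).congr_dist <| tendsto_order.2
    ⟨fun a ha => .of_forall fun N => ha.trans_le dist_nonneg, fun ε hε => ?_⟩
  filter_upwards [Metric.tendstoUniformlyOn_iff.1 hG (ε / (V + 1)) (by positivity)] with N hN
  calc dist (quadSum V (x N) g) (quadSum V (x N) (G N))
      ≤ V * (ε / (V + 1)) := dist_quadSum_le hV (by positivity) fun i => (hN _ (hx N i)).le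
    _ < ε := mul_div_add_one_lt hV hε

theorem tendsto_quadSum_quadSum (hx : ∀ N i, x N i ∈ Ω)
    (hL : ∀ f, ContinuousOn f Ω → Tendsto (fun N => quadSum V (x N) f) atTop (𝓝 (L f)))
    (hΩ : IsCompact Ω) (hV : 0 ≤ V) {g : α → α → ℝ} (hg : ContinuousOn (uncurry g) (Ω ×ˢ Ω)) :
    Tendsto (fun N => quadSum V (x N) fun y => quadSum V (x N) (g y)) atTop
      (𝓝 (L fun y => L (g y))) :=
  have hunif := tendstoUniformlyOn_quadSum hx hL hΩ hΩ hg hV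
  tendsto_quadSum_of_tendstoUniformlyOn hx hL hunif
    (hunif.continuousOn (.of_forall (continuousOn_quadSum hg hx))) hV

theorem continuousOn_uncurry_mul_kernel {a b : α → α → ℝ}
    (ha : ContinuousOn (uncurry a) (Ω ×ˢ Ω)) (hb : ContinuousOn (uncurry b) (Ω ×ˢ Ω)) :
    ContinuousOn (uncurry fun (p : α × α) z => a p.1 z * b z p.2) ((Ω ×ˢ Ω) ×ˢ Ω) :=
  (ha.comp (f := fun q : (α × α) × α => (q.1.1, q.2)) (by fun_prop) fun _ hq => ⟨hq.1.1, hq.2⟩).mul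
    (hb.comp (f := fun q : (α × α) × α => (q.2, q.1.2)) (by fun_prop) fun _ hq => ⟨hq.2, hq.1.2⟩)

end EquidistributedSamples

theorem stmt_0 {d : ℕ} (Ω : Set (EuclideanSpace ℝ (Fin d)))
    (hΩc : IsCompact Ω) (hΩpos : 0 < (volume Ω).toReal)
    (X : (N : ℕ) → Fin N → EuclideanSpace ℝ (Fin d))
    (hX : ∀ N i, X N i ∈ Ω)
    (hunif : ∀ f : EuclideanSpace ℝ (Fin d) → ℝ, ContinuousOn f Ω →
      Tendsto (fun N : ℕ => ((volume Ω).toReal / N) * ∑ i : Fin N, f (X N i))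
        atTop (nhds (∫ x in Ω, f x)))
    (κA κB κC : EuclideanSpace ℝ (Fin d) → EuclideanSpace ℝ (Fin d) → ℝ)
    (hκA : ContinuousOn
      (fun p : EuclideanSpace ℝ (Fin d) × EuclideanSpace ℝ (Fin d) => κA p.1 p.2) (Ω ×ˢ Ω))
    (hκB : ContinuousOn
      (fun p : EuclideanSpace ℝ (Fin d) × EuclideanSpace ℝ (Fin d) => κB p.1 p.2) (Ω ×ˢ Ω))
    (hκC : ∀ x y, κC x y = ∫ z in Ω, κA x z * κB z y)
    (hpos : 0 < ∫ x in Ω, ∫ y in Ω, (κC x y) ^ 2) :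
    Tendsto (fun N : ℕ =>
        frobNorm
          ((((N : ℝ) / (volume Ω).toReal) •
              Matrix.of (fun i j : Fin N => κC (X N i) (X N j))) -
            (Matrix.of (fun i j : Fin N => κA (X N i) (X N j))) *
              (Matrix.of (fun i j : Fin N => κB (X N i) (X N j)))) /
        frobNorm
          (((N : ℝ) / (volume Ω).toReal) •
            Matrix.of (fun i j : Fin N => κC (X N i) (X N j))))
      atTop (nhds 0) := by
  set V := (volume Ω).toReal
  have hκAB := continuousOn_uncurry_mul_kernel hκA hκB
  have hconv : TendstoUniformlyOn (fun N p => quadSum V (X N) fun z => κA p.1 z * κB z p.2)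
      (fun p => κC p.1 p.2) atTop (Ω ×ˢ Ω) := by
    simpa only [hκC] using tendstoUniformlyOn_quadSum hX hunif (hΩc.prod hΩc) hΩc hκAB hΩpos.le
  have hκC2 : ContinuousOn (uncurry fun x y => κC x y ^ 2) (Ω ×ˢ Ω) :=
    (hconv.continuousOn (.of_forall (continuousOn_quadSum hκAB hX))).pow 2
  have hnum := (tendsto_frobNorm_sub_div_of_tendstoUniformlyOn hconv hX).const_mul V
  have hden := (tendsto_quadSum_quadSum hX hunif hΩc hΩpos.le hκC2).sqrt
  have hratio := hnum.div hden (Real.sqrt_pos.2 hpos).ne'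
  rw [mul_zero, zero_div] at hratio
  refine hratio.congr' ?_
  filter_upwards [eventually_ne_atTop 0] with N hN
  -- both norms carry the factor `N/|Ω|`; rescaling by `|Ω|/N` matches `hnum` and `hden`
  rw [Pi.div_apply, of_mul_of_eq_smul_quadSum hΩpos.ne' hN, ← smul_sub, frobNorm_smul,
    frobNorm_smul, mul_div_mul_left _ _ (by positivity),
    ← frobNorm_mul_div_eq_sqrt_quadSum hΩpos.le]
  field_simp
end

section
/- Let f : ℝ → ℝ be Lipschitz continuous with constant L, i.e., |f(s) − f(t)| ≤ L|s − t| for all s, t ∈ ℝ. For a real symmetric matrix A ∈ ℝ^{N×N} with spectral decomposition A = U diag(λ_1,…,λ_N) Uᵀ (U orthogonal), define f(A) := U diag(f(λ_1),…,f(λ_N)) Uᵀ. Then for all real symmetric matrices A, A' ∈ ℝ^{N×N} one has ‖f(A) − f(A')‖_F ≤ L ‖A − A'‖_F. -/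
open Matrix

lemma sumSq_eq_trace {N : ℕ} (M : Matrix (Fin N) (Fin N) ℝ) :
    ∑ i, ∑ j, (M i j) ^ 2 = Matrix.trace (Mᵀ * M) := by
  simp [Matrix.trace, Matrix.mul_apply, Matrix.diag, sq]
  exact Finset.sum_comm

lemma trace_inv {N : ℕ} (U U' M : Matrix (Fin N) (Fin N) ℝ)
    (hU : U * Uᵀ = 1) (hU' : U' * U'ᵀ = 1) :
    ∑ i, ∑ j, ((Uᵀ * M * U') i j) ^ 2 = ∑ i, ∑ j, (M i j) ^ 2 := by
  rw [sumSq_eq_trace, sumSq_eq_trace]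
  have : (Uᵀ * M * U')ᵀ * (Uᵀ * M * U') = U'ᵀ * (Mᵀ * M) * U' := by
    simp [Matrix.transpose_mul, Matrix.mul_assoc]
    rw [← Matrix.mul_assoc U, hU, Matrix.one_mul]
  rw [this, Matrix.trace_mul_comm, ← Matrix.mul_assoc, hU', Matrix.one_mul]

theorem stmt_7 {N : ℕ} (f : ℝ → ℝ) (L : ℝ)
    (hf : ∀ s t : ℝ, |f s - f t| ≤ L * |s - t|)
    (A A' U U' : Matrix (Fin N) (Fin N) ℝ) (lam lam' : Fin N → ℝ)
    (hAsymm : A = Aᵀ) (hA'symm : A' = A'ᵀ)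
    (hU : U * Uᵀ = 1) (hU' : U' * U'ᵀ = 1)
    (hAdec : A = U * Matrix.diagonal lam * Uᵀ)
    (hA'dec : A' = U' * Matrix.diagonal lam' * U'ᵀ) :
    frobNorm (U * Matrix.diagonal (fun i => f (lam i)) * Uᵀ -
        U' * Matrix.diagonal (fun i => f (lam' i)) * U'ᵀ) ≤
      L * frobNorm (A - A') := by
  have hL : 0 ≤ L := by
    have h := hf 0 1
    simp at h
    exact le_trans (abs_nonneg _) h
  have hUo : Uᵀ * U = 1 := mul_eq_one_comm.mp hU
  have hU'o : U'ᵀ * U' = 1 := mul_eq_one_comm.mp hU'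
  set W := Uᵀ * U' with hW
  have key : ∀ d d' : Fin N → ℝ,
      ∑ i, ∑ j, ((U * Matrix.diagonal d * Uᵀ - U' * Matrix.diagonal d' * U'ᵀ) i j) ^ 2
        = ∑ i, ∑ j, (W i j) ^ 2 * (d i - d' j) ^ 2 := by
    intro d d'
    have h1 : Uᵀ * (U * Matrix.diagonal d * Uᵀ - U' * Matrix.diagonal d' * U'ᵀ) * U'
        = Matrix.diagonal d * W - W * Matrix.diagonal d' := by
      rw [Matrix.mul_sub, Matrix.sub_mul, hW]
      congr 1
      · calc Uᵀ * (U * Matrix.diagonal d * Uᵀ) * U'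
            = (Uᵀ * U) * Matrix.diagonal d * (Uᵀ * U') := by
              simp only [Matrix.mul_assoc]
          _ = Matrix.diagonal d * (Uᵀ * U') := by rw [hUo, Matrix.one_mul]
      · calc Uᵀ * (U' * Matrix.diagonal d' * U'ᵀ) * U'
            = (Uᵀ * U') * Matrix.diagonal d' * (U'ᵀ * U') := by
              simp only [Matrix.mul_assoc]
          _ = (Uᵀ * U') * Matrix.diagonal d' := by rw [hU'o, Matrix.mul_one]
    rw [← trace_inv U U' _ hU hU', h1]
    refine Finset.sum_congr rfl fun i _ => Finset.sum_congr rfl fun j _ => ?_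
    simp [Matrix.sub_apply, Matrix.diagonal_mul, Matrix.mul_diagonal]
    ring
  have hfrob : ∀ d d' : Fin N → ℝ,
      frobNorm (U * Matrix.diagonal d * Uᵀ - U' * Matrix.diagonal d' * U'ᵀ)
        = Real.sqrt (∑ i, ∑ j, (W i j) ^ 2 * (d i - d' j) ^ 2) := by
    intro d d'; rw [frobNorm, key]
  rw [hfrob, hAdec, hA'dec, hfrob]
  rw [← Real.sqrt_sq hL, ← Real.sqrt_mul (sq_nonneg L)]
  apply Real.sqrt_le_sqrt
  rw [Finset.mul_sum]
  refine Finset.sum_le_sum fun i _ => ?_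
  rw [Finset.mul_sum]
  refine Finset.sum_le_sum fun j _ => ?_
  have h2 : (f (lam i) - f (lam' j)) ^ 2 ≤ L ^ 2 * (lam i - lam' j) ^ 2 := by
    calc (f (lam i) - f (lam' j)) ^ 2 = |f (lam i) - f (lam' j)| ^ 2 := (sq_abs _).symm
      _ ≤ (L * |lam i - lam' j|) ^ 2 := pow_le_pow_left₀ (abs_nonneg _) (hf (lam i) (lam' j)) 2
      _ = L ^ 2 * (lam i - lam' j) ^ 2 := by rw [mul_pow, sq_abs]
  nlinarith [sq_nonneg (W i j)]
end

section
/- Let q ∈ ℕ and d ≥ 1. Let x_1,…,x_n be points of a finite set ν ⊂ ℝ^d with Euclidean diameter diam(ν), and let ω ∈ ℝ^n be such that the signed measure σ = Σ_{i=1}^n ω_i δ_{x_i} has vanishing moments of order q+1. Then for every (q+1)-times continuously differentiable function f : ℝ^d → ℝ all of whose partial derivatives up to order q+1 are bounded, it holds |Σ_{i=1}^n ω_i f(x_i)| ≤ (d/2)^{q+1} · diam(ν)^{q+1} / (q+1)! · ‖f‖_{C^{q+1}} · ‖ω‖_1, where ‖f‖_{C^{q+1}} := max_{|α| ≤ q+1}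 sup_{x ∈ ℝ^d} |∂^α f(x)| and ‖ω‖_1 = Σ_{i=1}^n |ω_i|. -/
/-!
Let `c` be the centre of the coordinate bounding box of `ν`, so that every coordinate of `y - c`,
`y ∈ ν`, is at most `diam ν / 2` in absolute value. The Taylor polynomial `P` of `f` at `c` of
order `q` is a polynomial of total degree `≤ q`, hence `∑ ωᵢ P(xᵢ) = 0` and
`∑ ωᵢ f(xᵢ) = ∑ ωᵢ (f(xᵢ) - P(xᵢ))`. Restricting `f` to the segment from `c` to `y`, the Lagrange
remainder is `D^{q+1} f(ξ) (y - c, …, y - c) / (q+1)!`; expanding `y - c` in the standard basis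
bounds it by `Cf (∑ⱼ |yⱼ - cⱼ|)^{q+1} / (q+1)! ≤ Cf (d diam ν / 2)^{q+1} / (q+1)!`.
-/

open Finset

section LineRestriction

variable {E F : Type*} [NormedAddCommGroup E] [NormedSpace ℝ E]
  [NormedAddCommGroup F] [NormedSpace ℝ F] {f : E → F} {N m : ℕ}

theorem iteratedDeriv_comp_add_smul (hf : ContDiff ℝ N f) (hm : m ≤ N) (c v : E) (t : ℝ) :
    iteratedDeriv m (fun s : ℝ => f (c + s • v)) t
      = iteratedFDeriv ℝ m f (c + t • v) (fun _ => v) := by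
  let L : ℝ →L[ℝ] E := (ContinuousLinearMap.id ℝ ℝ).smulRight v
  have hshift : ContDiff ℝ N (fun z => f (c + z)) := hf.comp (contDiff_const.add contDiff_id)
  have hcomp : (fun s : ℝ => f (c + s • v)) = (fun z => f (c + z)) ∘ L := rfl
  rw [iteratedDeriv_eq_iteratedFDeriv, hcomp,
    L.iteratedFDeriv_comp_right hshift t (by exact_mod_cast hm),
    ContinuousMultilinearMap.compContinuousLinearMap_apply, iteratedFDeriv_comp_add_left]
  simp [L]

end LineRestriction

open Nat Set in
theorem exists_sub_taylor_unitInterval_eq {g : ℝ → ℝ} {q : ℕ} (hg : ContDiff ℝ (q + 1) g) :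
    ∃ t ∈ Ioo (0 : ℝ) 1, g 1 - ∑ k ∈ range (q + 1), iteratedDeriv k g 0 / k !
      = iteratedDeriv (q + 1) g t / (q + 1)! := by
  obtain ⟨t, ht, h⟩ := taylor_mean_remainder_lagrange_iteratedDeriv zero_ne_one hg.contDiffOn
  rw [uIoo_of_le zero_le_one] at ht
  refine ⟨t, ht, ?_⟩
  rw [taylor_within_apply] at h
  convert h using 3 with k hk
  · rw [iteratedDerivWithin_eq_iteratedDeriv (uniqueDiffOn_uIcc zero_ne_one)
      ((hg.of_le _).contDiffAt) (by simp)]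
    · simp [div_eq_inv_mul]
    · exact_mod_cast (mem_range.mp hk).le
  · simp

namespace ContinuousMultilinearMap

variable {ι E : Type*} [Fintype ι] [NormedAddCommGroup E] [NormedSpace ℝ E]
  {m : ℕ} (D : ContinuousMultilinearMap ℝ (fun _ : Fin m => E) ℝ) (b : Module.Basis ι ℝ E)

theorem apply_const_eq_sum_basis (w : E) :
    D (fun _ => w) = ∑ r : Fin m → ι, (∏ k, b.repr w (r k)) * D (fun k => b (r k)) := by
  conv_lhs => rw [← b.sum_repr w]
  rw [D.map_sum (fun _ j => b.repr w j • b j)]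
  refine sum_congr rfl fun r _ => ?_
  rw [D.map_smul_univ, smul_eq_mul]

theorem abs_apply_const_le {C : ℝ} (hC : ∀ r : Fin m → ι, |D (fun k => b (r k))| ≤ C) (w : E) :
    |D (fun _ => w)| ≤ C * (∑ j, |b.repr w j|) ^ m := by
  rw [apply_const_eq_sum_basis D b]
  calc |∑ r : Fin m → ι, (∏ k, b.repr w (r k)) * D (fun k => b (r k))|
      ≤ ∑ r : Fin m → ι, (∏ k, |b.repr w (r k)|) * C := by
        refine (abs_sum_le_sum_abs _ _).trans (sum_le_sum fun r _ => ?_)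
        rw [abs_mul, abs_prod]
        exact mul_le_mul_of_nonneg_left (hC r) (prod_nonneg fun _ _ => abs_nonneg _)
    _ = C * (∑ j, |b.repr w j|) ^ m := by
        rw [← sum_mul, mul_comm, ← Fin.prod_const, prod_univ_sum, Fintype.piFinset_univ]

end ContinuousMultilinearMap

section TaylorPolynomial

open MvPolynomial Nat

variable {ι E : Type*} [Fintype ι] [NormedAddCommGroup E] [NormedSpace ℝ E]
  (b : Module.Basis ι ℝ E) (f : E → ℝ) (c : E) (q : ℕ)

noncomputable def taylorMvPolynomial : MvPolynomial ι ℝ :=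
  ∑ m ∈ range (q + 1), (m ! : ℝ)⁻¹ • ∑ r : Fin m → ι,
    iteratedFDeriv ℝ m f c (fun k => b (r k)) • ∏ k, (X (r k) - C (b.repr c (r k)))

theorem totalDegree_taylorMvPolynomial_le : (taylorMvPolynomial b f c q).totalDegree ≤ q := by
  refine totalDegree_finsetSum_le fun m hm => (totalDegree_smul_le _ _).trans ?_
  refine totalDegree_finsetSum_le fun r _ => (totalDegree_smul_le _ _).trans ?_
  calc (∏ k, (X (r k) - C (b.repr c (r k)) : MvPolynomial ι ℝ)).totalDegree
      ≤ ∑ k : Fin m, (X (r k) - C (b.repr c (r k)) : MvPolynomial ι ℝ).totalDegree :=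
        totalDegree_finsetProd _ _
    _ ≤ ∑ _k : Fin m, 1 := sum_le_sum fun k _ =>
        (totalDegree_sub_C_le _ _).trans (totalDegree_X (r k)).le
    _ ≤ q := by simpa using Nat.lt_succ_iff.mp (mem_range.mp hm)

theorem eval_taylorMvPolynomial (y : E) :
    eval (b.repr y) (taylorMvPolynomial b f c q)
      = ∑ m ∈ range (q + 1), (m ! : ℝ)⁻¹ * iteratedFDeriv ℝ m f c (fun _ => y - c) := by
  simp only [taylorMvPolynomial, map_sum, smul_eval]
  refine sum_congr rfl fun m _ => ?_
  rw [(iteratedFDeriv ℝ m f c).apply_const_eq_sum_basis b]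
  refine congrArg _ (sum_congr rfl fun r _ => ?_)
  simp [mul_comm]

theorem abs_sub_eval_taylorMvPolynomial_le (hf : ContDiff ℝ (q + 1) f) {C : ℝ}
    (hC : ∀ (r : Fin (q + 1) → ι) (z : E), |iteratedFDeriv ℝ (q + 1) f z (fun k => b (r k))| ≤ C)
    (y : E) :
    |f y - eval (b.repr y) (taylorMvPolynomial b f c q)|
      ≤ C * (∑ j, |b.repr (y - c) j|) ^ (q + 1) / (q + 1)! := by
  set v := y - c
  have hline : ∀ m ≤ q + 1, ∀ t : ℝ,
      iteratedDeriv m (fun s : ℝ => f (c + s • v)) t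
        = iteratedFDeriv ℝ m f (c + t • v) (fun _ => v) :=
    fun m hm t => iteratedDeriv_comp_add_smul (N := q + 1) (by exact_mod_cast hf) hm c v t
  obtain ⟨t, -, hrem⟩ := exists_sub_taylor_unitInterval_eq (g := fun s : ℝ => f (c + s • v))
    (hf.comp (contDiff_const.add (contDiff_id.smul contDiff_const)))
  have hpoly : eval (b.repr y) (taylorMvPolynomial b f c q)
      = ∑ k ∈ range (q + 1), iteratedDeriv k (fun s : ℝ => f (c + s • v)) 0 / k ! := by
    rw [eval_taylorMvPolynomial]
    refine sum_congr rfl fun k hk => ?_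
    rw [hline k (mem_range.mp hk).le, zero_smul, add_zero, div_eq_inv_mul]
  have hy : f (c + (1 : ℝ) • v) = f y := by simp [v]
  rw [hpoly, ← hy, hrem, hline (q + 1) le_rfl, abs_div, Nat.abs_cast]
  gcongr
  exact (iteratedFDeriv ℝ (q + 1) f (c + t • v)).abs_apply_const_le b (hC · _) v

end TaylorPolynomial

theorem PiLp.exists_forall_abs_sub_le_half_diam {ι : Type*} [Fintype ι] {p : ENNReal}
    [Fact (1 ≤ p)] (s : Finset (PiLp p (fun _ : ι => ℝ))) :
    ∃ c : PiLp p (fun _ : ι => ℝ), ∀ y ∈ s, ∀ j,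
      |y j - c j| ≤ Metric.diam (s : Set (PiLp p (fun _ : ι => ℝ))) / 2 := by
  rcases s.eq_empty_or_nonempty with rfl | hs
  · exact ⟨0, by simp⟩
  refine ⟨WithLp.toLp p fun j => (s.inf' hs (· j) + s.sup' hs (· j)) / 2, fun y hy j => ?_⟩
  obtain ⟨a, ha, hsup⟩ := s.exists_mem_eq_sup' hs (· j)
  obtain ⟨b, hb, hinf⟩ := s.exists_mem_eq_inf' hs (· j)
  have hlo : b j ≤ y j := hinf ▸ s.inf'_le (· j) hy
  have hhi : y j ≤ a j := hsup ▸ s.le_sup' (· j) hy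
  have hwidth : a j - b j ≤ Metric.diam (s : Set (PiLp p (fun _ : ι => ℝ))) :=
    calc a j - b j ≤ dist (a j) (b j) := le_abs_self _
      _ ≤ dist a b := PiLp.dist_apply_le a b j
      _ ≤ _ := Metric.dist_le_diam_of_mem s.finite_toSet.isBounded ha hb
  simp only [hsup, hinf]
  rw [abs_le]
  constructor <;> linarith

theorem abs_sum_mul_le_of_sum_mul_eq_zero {ι : Type*} (s : Finset ι) {ω a b : ι → ℝ} {K : ℝ}
    (hb : ∑ i ∈ s, ω i * b i = 0) (hab : ∀ i ∈ s, |a i - b i| ≤ K) :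
    |∑ i ∈ s, ω i * a i| ≤ K * ∑ i ∈ s, |ω i| := by
  have hsplit : ∑ i ∈ s, ω i * a i = ∑ i ∈ s, ω i * (a i - b i) := by
    simp only [mul_sub, sum_sub_distrib, hb, sub_zero]
  rw [hsplit, mul_sum]
  refine (abs_sum_le_sum_abs _ _).trans (sum_le_sum fun i hi => ?_)
  rw [abs_mul, mul_comm K]
  exact mul_le_mul_of_nonneg_left (hab i hi) (abs_nonneg _)

theorem stmt_9_general {d : ℕ} (q : ℕ) {n : ℕ}
    (ν : Finset (EuclideanSpace ℝ (Fin d)))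
    (x : Fin n → EuclideanSpace ℝ (Fin d)) (hx : ∀ i, x i ∈ ν)
    (ω : Fin n → ℝ)
    (hvan : ∀ p : MvPolynomial (Fin d) ℝ, p.totalDegree ≤ q →
      ∑ i, ω i * MvPolynomial.eval (fun j => x i j) p = 0)
    (f : EuclideanSpace ℝ (Fin d) → ℝ) (hf : ContDiff ℝ (q + 1 : ℕ) f)
    (Cf : ℝ)
    (hCf : ∀ m : ℕ, m ≤ q + 1 → ∀ (js : Fin m → Fin d) (z : EuclideanSpace ℝ (Fin d)),
      |iteratedFDeriv ℝ m f z (fun k => EuclideanSpace.single (js k) (1 : ℝ))| ≤ Cf) :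
    |∑ i, ω i * f (x i)| ≤
      ((d : ℝ) / 2) ^ (q + 1) * Metric.diam (ν : Set (EuclideanSpace ℝ (Fin d))) ^ (q + 1) /
        (Nat.factorial (q + 1) : ℝ) * Cf * ∑ i, |ω i| := by
  set R := Metric.diam (ν : Set (EuclideanSpace ℝ (Fin d)))
  obtain ⟨c, hc⟩ := PiLp.exists_forall_abs_sub_le_half_diam ν
  have hCf0 : 0 ≤ Cf := (abs_nonneg _).trans (hCf 0 (Nat.zero_le _) Fin.elim0 0)
  let b := (EuclideanSpace.basisFun (Fin d) ℝ).toBasis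
  refine abs_sum_mul_le_of_sum_mul_eq_zero _
    (hvan _ (totalDegree_taylorMvPolynomial_le b f c q)) fun i _ => ?_
  have hdist : ∑ j, |b.repr (x i - c) j| ≤ d / 2 * R := by
    calc ∑ j, |b.repr (x i - c) j| ≤ ∑ _j : Fin d, R / 2 := sum_le_sum fun j _ => hc _ (hx i) j
      _ = d / 2 * R := by
        rw [sum_const, card_univ, Fintype.card_fin, nsmul_eq_mul]; ring
  calc |f (x i) - MvPolynomial.eval (b.repr (x i)) (taylorMvPolynomial b f c q)|
      ≤ Cf * (∑ j, |b.repr (x i - c) j|) ^ (q + 1) / Nat.factorial (q + 1) :=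
        abs_sub_eval_taylorMvPolynomial_le b f c q hf
          (fun r z => by simpa [b] using hCf (q + 1) le_rfl r z) (x i)
    _ ≤ Cf * (d / 2 * R) ^ (q + 1) / Nat.factorial (q + 1) := by gcongr
    _ = _ := by ring

theorem stmt_9 {d : ℕ} (hd : 1 ≤ d) (q : ℕ) {n : ℕ}
    (ν : Finset (EuclideanSpace ℝ (Fin d)))
    (x : Fin n → EuclideanSpace ℝ (Fin d)) (hx : ∀ i, x i ∈ ν)
    (ω : Fin n → ℝ)
    (hvan : ∀ p : MvPolynomial (Fin d) ℝ, p.totalDegree ≤ q →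
      ∑ i, ω i * MvPolynomial.eval (fun j => x i j) p = 0)
    (f : EuclideanSpace ℝ (Fin d) → ℝ) (hf : ContDiff ℝ (q + 1 : ℕ) f)
    (Cf : ℝ)
    (hCf : ∀ m : ℕ, m ≤ q + 1 → ∀ (js : Fin m → Fin d) (z : EuclideanSpace ℝ (Fin d)),
      |iteratedFDeriv ℝ m f z (fun k => EuclideanSpace.single (js k) (1 : ℝ))| ≤ Cf) :
    |∑ i, ω i * f (x i)| ≤
      ((d : ℝ) / 2) ^ (q + 1) * Metric.diam (ν : Set (EuclideanSpace ℝ (Fin d))) ^ (q + 1) /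
        (Nat.factorial (q + 1) : ℝ) * Cf * ∑ i, |ω i| :=
  stmt_9_general q ν x hx ω hvan f hf Cf hCf
end
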